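/- Let V be a weak-star closed subspace of M(S)^N and suppose tilde f, f ∈ H. Let μ_{λ,f} be a global minimizer of F_{f,λ} over M(S)^N and μ̃ a minimizer of F_{f̃,λ} over V. Define κ(V,μ) = inf_{ν∈V} max{‖A(μ−ν)‖_H, |‖μ‖_TV − ‖ν‖_TV|} and d_λ = κ(V, μ_{λ,f})(2‖f̃‖+4‖f‖+κ(V,μ_{λ,f})+λ). Then F_{f̃,λ}(μ̃) ≤ F_{f̃,λ}(μ_{λ,f}) + d_λ, where F_{g,λ}(μ) = −2⟨g, Aμ⟩ + ‖Aμ‖² + λ‖μ‖_TV. -/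

import Mathlib

open MeasureTheory Filter Topology Metric
open scoped RealInnerProductSpace ENNReal

/-- `ℝ^N` with the Euclidean norm. -/
abbrev EucN (N : ℕ) := EuclideanSpace ℝ (Fin N)

/-- An `ℝ^N`-valued finite signed Borel measure, represented by its `N`
components, each a finite signed measure. -/
abbrev VM (α : Type) [MeasurableSpace α] (N : ℕ) := Fin N → MeasureTheory.SignedMeasure α

namespace VM

variable {α : Type} [MeasurableSpace α] {N : ℕ}

/-- A dominating positive measure for all components of `μ`. -/
noncomputable def base (μ : VM α N) : Measure α := ∑ i, (μ i).totalVariation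

/-- The vector density (Radon–Nikodym derivative) of `μ` with respect to `μ.base`. -/
noncomputable def dens (μ : VM α N) (x : α) : EucN N := WithLp.toLp 2 (fun i => (μ i).rnDeriv μ.base x)

/-- The total variation measure `|μ|` of the vector measure `μ`. -/
noncomputable def var (μ : VM α N) : Measure α := μ.base.withDensity (fun x => ‖μ.dens x‖₊)

/-- The total variation norm `‖μ‖_TV = |μ|(S)`. -/
noncomputable def tv (μ : VM α N) : ℝ := (μ.var Set.univ).toReal

/-- The value `μ(E) ∈ ℝ^N` of the vector measure on a set `E`. -/
noncomputable def val (μ : VM α N) (E : Set α) : EucN N := WithLp.toLp 2 (fun i => μ i E)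

/-- The pairing `⟨φ, μ⟩ = ∫ φ · dμ`. -/
noncomputable def pair (μ : VM α N) (φ : α → EucN N) : ℝ :=
  ∫ x, ⟪φ x, μ.dens x⟫ ∂(μ.base)

end VM

/-- The weak-star topology on `M(S)^N`, induced by the pairings against
continuous test functions (i.e. by the duality with `C(S)^N`). -/
noncomputable def wsTopology (M : ℕ) (S : Set (EucN M)) (N : ℕ) :
    TopologicalSpace (VM S N) :=
  TopologicalSpace.induced (fun (μ : VM S N) => fun φ : C(S, EucN N) => μ.pair φ)
    inferInstance

/-- The shifted criterion `F_{f,λ}(μ) = −2⟨f, Aμ⟩ + ‖Aμ‖² + λ‖μ‖_TV`. -/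
noncomputable def Fcrit {M N : ℕ} {S : Set (EucN M)} {H : Type}
    [NormedAddCommGroup H] [InnerProductSpace ℝ H]
    (A : VM S N →ₗ[ℝ] H) (f : H) (l : ℝ) (μ : VM S N) : ℝ :=
  -2 * ⟪f, A μ⟫ + ‖A μ‖ ^ 2 + l * μ.tv


/-- Quasi-optimality estimate: `F_{f̃,λ}(μ̃) ≤ F_{f̃,λ}(μ_{λ,f}) + d_λ` with
`d_λ = κ(V, μ_{λ,f})(2‖f̃‖ + 4‖f‖ + κ(V, μ_{λ,f}) + λ)`. -/
theorem stmt13 {M N : ℕ} (S : Set (EucN M)) (hS : IsCompact S)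
    {H : Type} [NormedAddCommGroup H] [InnerProductSpace ℝ H] [CompleteSpace H]
    (A : VM S N →ₗ[ℝ] H)
    (hA : @Continuous _ _ (wsTopology M S N) _ A)
    (V : Submodule ℝ (VM S N))
    (hV : @IsClosed _ (wsTopology M S N) (V : Set (VM S N)))
    (l : ℝ) (hl : 0 < l) (f ft : H)
    (μf : VM S N) (hμf : ∀ ν : VM S N, Fcrit A f l μf ≤ Fcrit A f l ν)
    (μt : VM S N) (hμtV : μt ∈ V) (hμt : ∀ ν ∈ V, Fcrit A ft l μt ≤ Fcrit A ft l ν) :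
    Fcrit A ft l μt ≤ Fcrit A ft l μf +
      sInf {r : ℝ | ∃ ν ∈ V, r = max ‖A (μf - ν)‖ |μf.tv - ν.tv|} *
        (2 * ‖ft‖ + 4 * ‖f‖ +
          sInf {r : ℝ | ∃ ν ∈ V, r = max ‖A (μf - ν)‖ |μf.tv - ν.tv|} + l) := by
  classical
  set T := {r : ℝ | ∃ ν ∈ V, r = max ‖A (μf - ν)‖ |μf.tv - ν.tv|} with hT
  set K := sInf T with hKdef
  have hTne : T.Nonempty := ⟨_, μt, hμtV, rfl⟩
  have hTpos : ∀ r ∈ T, (0 : ℝ) ≤ r := by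
    rintro r ⟨ν, -, rfl⟩
    exact le_max_of_le_left (norm_nonneg _)
  have hTbdd : BddBelow T := ⟨0, hTpos⟩
  have hK0 : 0 ≤ K := le_csInf hTne hTpos
  have htvnn : ∀ μ : VM S N, (0 : ℝ) ≤ μ.tv := fun μ => ENNReal.toReal_nonneg
  -- ‖A μf‖ ≤ 2 ‖f‖
  have htv0 : (0 : VM S N).tv = 0 := by
    have hb : (0 : VM S N).base = 0 := by
      simp [VM.base, Pi.zero_apply, MeasureTheory.SignedMeasure.totalVariation_zero]
    simp [VM.tv, VM.var, hb]
  have hAf : ‖A μf‖ ≤ 2 * ‖f‖ := by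
    have h0 := hμf 0
    rw [Fcrit, Fcrit, map_zero, htv0] at h0
    simp only [inner_zero_right, norm_zero] at h0
    have hip : ⟪f, A μf⟫ ≤ ‖f‖ * ‖A μf‖ := real_inner_le_norm f (A μf)
    have htv := htvnn μf
    have hx2 : ‖A μf‖ ^ 2 ≤ 2 * ‖f‖ * ‖A μf‖ := by nlinarith [mul_nonneg hl.le htv]
    rcases eq_or_lt_of_le (norm_nonneg (A μf)) with h | h
    · rw [← h]; positivity
    · nlinarith
  set C := 2 * ‖ft‖ + 4 * ‖f‖ with hCdef
  have hC0 : 0 ≤ C := by positivity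
  -- key estimate for each r ∈ T
  have key : ∀ r ∈ T, Fcrit A ft l μt ≤ Fcrit A ft l μf + r * (C + r + l) := by
    rintro r ⟨ν, hνV, rfl⟩
    set r := max ‖A (μf - ν)‖ |μf.tv - ν.tv| with hrdef
    have hr0 : 0 ≤ r := le_max_of_le_left (norm_nonneg _)
    have hr1 : ‖A μf - A ν‖ ≤ r := by
      rw [← map_sub]; exact le_max_left _ _
    have hr2 : ν.tv - μf.tv ≤ r := by
      have := le_max_right ‖A (μf - ν)‖ |μf.tv - ν.tv|
      have := abs_le.mp (le_trans (le_refl _) this)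
      linarith [this.1]
    have hnν : ‖A ν‖ ≤ ‖A μf‖ + r := by
      calc ‖A ν‖ ≤ ‖A μf‖ + ‖A ν - A μf‖ := by
            have := norm_sub_norm_le (A ν) (A μf); linarith [norm_nonneg (A ν - A μf)]
        _ ≤ ‖A μf‖ + r := by rw [norm_sub_rev]; linarith
    have hinner : ⟪ft, A μf⟫ - ⟪ft, A ν⟫ ≤ ‖ft‖ * r := by
      have h1 : ⟪ft, A μf⟫ - ⟪ft, A ν⟫ = ⟪ft, A μf - A ν⟫ := by
        rw [inner_sub_right]
      rw [h1]
      calc ⟪ft, A μf - A ν⟫ ≤ ‖ft‖ * ‖A μf - A ν‖ := real_inner_le_norm _ _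
        _ ≤ ‖ft‖ * r := by
            exact mul_le_mul_of_nonneg_left hr1 (norm_nonneg ft)
    have h1 := hμt ν hνV
    rw [Fcrit, Fcrit] at h1 ⊢
    have hsq : ‖A ν‖ ^ 2 ≤ (‖A μf‖ + r) ^ 2 := by
      have := norm_nonneg (A ν)
      nlinarith
    nlinarith [norm_nonneg (A μf), norm_nonneg f, norm_nonneg ft, hl.le,
      mul_le_mul_of_nonneg_left hAf (mul_nonneg (by norm_num : (0:ℝ) ≤ 2) hr0)]
  -- pass to infimum via ε-argument
  have main : Fcrit A ft l μt ≤ Fcrit A ft l μf + K * (C + K + l) := by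
    refine le_of_forall_pos_le_add ?_
    intro ε hε
    set D := C + l + 2 * K + 1 with hDdef
    have hD : 0 < D := by positivity
    set δ := min (ε / D) 1 with hδdef
    have hδ0 : 0 < δ := lt_min (div_pos hε hD) one_pos
    have hδ1 : δ ≤ 1 := min_le_right _ _
    have hδD : δ * D ≤ ε := by
      have : δ ≤ ε / D := min_le_left _ _
      calc δ * D ≤ (ε / D) * D := mul_le_mul_of_nonneg_right this hD.le
        _ = ε := div_mul_cancel₀ ε hD.ne'
    obtain ⟨r, hrT, hrlt⟩ := exists_lt_of_csInf_lt hTne (by linarith : sInf T < K + δ)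
    have hr0 := hTpos r hrT
    have h1 := key r hrT
    have h2 : r * (C + r + l) ≤ (K + δ) * (C + (K + δ) + l) := by
      apply mul_le_mul hrlt.le (by linarith) (by positivity) (by linarith)
    nlinarith [hδ0.le, hK0, hC0, hl.le]
  exact main
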